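/- Let Z₁,...,Z_N be independent discrete random variables on a finite set 𝒵 with joint distribution P_{Z^ℐ} = ∏ᵢ P_{Zᵢ}, and let ℓ(h,z) be a loss bounded by b. Let α₁,...,α_N ≥ 0 with Σᵢ αᵢ = 1. Then the absolute difference between the joint self-information weighted risk 𝔼[Σᵢ αᵢ ℓ(h,Zᵢ)·log(1/P_{Z^ℐ}(Z₁,...,Z_N))] and the weighted sum of marginal self-information weighted risks Σᵢ αᵢ 𝔼[ℓ(h,Zᵢ)·log(1/P_{Zᵢ}(Zᵢ))] is at most b·H(Z^ℐ) − b·Σᵢ αᵢ H(Zᵢ), where H(Z^ℐ) = Σᵢ H(Zᵢ) is the joint entropy. -/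

import Mathlib

/-!
Expanding `log (1 / ∏ⱼ pⱼ(zⱼ)) = ∑ⱼ log (1 / pⱼ(zⱼ))` turns the joint risk into
`∑ᵢ αᵢ ∑ⱼ 𝔼[ℓ(Zᵢ) log (1 / pⱼ(Zⱼ))]`. The diagonal terms give the marginal risks, and by
independence each off-diagonal term factors as `𝔼[ℓ(Zᵢ)] H(Zⱼ)`. So the gap is
`∑ᵢ αᵢ 𝔼[ℓ(Zᵢ)] ∑_{j ≠ i} H(Zⱼ)`, which lies between `0` and `b ∑ᵢ αᵢ ∑_{j ≠ i} H(Zⱼ)`.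
-/

open Finset Real

noncomputable def entropy {Z : Type*} [Fintype Z] (q : Z → ℝ) : ℝ :=
  ∑ x, q x * log (1 / q x)

theorem entropy_nonneg {Z : Type*} [Fintype Z] {q : Z → ℝ} (hq : ∀ x, 0 ≤ q x)
    (hqsum : ∑ x, q x = 1) : 0 ≤ entropy q := by
  refine sum_nonneg fun x _ => ?_
  have hq1 : q x ≤ 1 := hqsum ▸ single_le_sum (fun y _ => hq y) (mem_univ x)
  rw [one_div, log_inv, mul_neg, ← neg_mul]
  exact negMulLog_nonneg (hq x) hq1

theorem prod_mul_log_one_div_prod {ι : Type*} (s : Finset ι) (q : ι → ℝ) :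
    (∏ i ∈ s, q i) * log (1 / ∏ i ∈ s, q i) = ∑ j ∈ s, (∏ i ∈ s, q i) * log (1 / q j) := by
  rw [← mul_sum]
  by_cases hq : ∀ i ∈ s, q i ≠ 0
  · simp only [one_div, log_inv, log_prod hq, sum_neg_distrib]
  · push Not at hq
    obtain ⟨i, hi, hqi⟩ := hq
    rw [prod_eq_zero hi hqi, zero_mul, zero_mul]

section Independence

variable {ι Z : Type*} [Fintype ι] [DecidableEq ι] [Fintype Z] {p : ι → Z → ℝ}

theorem sum_prod_mul_prod_eq_prod_sum (hpsum : ∀ i, ∑ x, p i x = 1) (s : Finset ι)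
    (f : ι → Z → ℝ) :
    ∑ z : ι → Z, (∏ i, p i (z i)) * ∏ i ∈ s, f i (z i) = ∏ i ∈ s, ∑ x, p i x * f i x := by
  have hfactor : ∀ z : ι → Z, (∏ i, p i (z i)) * ∏ i ∈ s, f i (z i)
      = ∏ i, p i (z i) * (if i ∈ s then f i (z i) else 1) := fun z => by
    rw [prod_mul_distrib, prod_ite_mem, univ_inter]
  simp_rw [hfactor]
  rw [← Fintype.prod_sum fun i x => p i x * if i ∈ s then f i x else 1, ← prod_subset (subset_univ s)]
  · exact prod_congr rfl fun i hi => by simp only [hi, if_true]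
  · intro i _ hi
    simp only [hi, if_false, mul_one, hpsum i]

theorem sum_prod_mul_apply (hpsum : ∀ i, ∑ x, p i x = 1) (j : ι) (f : Z → ℝ) :
    ∑ z : ι → Z, (∏ i, p i (z i)) * f (z j) = ∑ x, p j x * f x := by
  simpa using sum_prod_mul_prod_eq_prod_sum hpsum {j} fun _ => f

theorem sum_prod_mul_apply_mul_apply (hpsum : ∀ i, ∑ x, p i x = 1) {i j : ι} (hij : i ≠ j)
    (f g : Z → ℝ) :
    ∑ z : ι → Z, (∏ k, p k (z k)) * (f (z i) * g (z j))
      = (∑ x, p i x * f x) * ∑ x, p j x * g x := by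
  simpa [prod_pair hij, hij.symm] using
    sum_prod_mul_prod_eq_prod_sum hpsum {i, j} fun k => if k = i then f else g

theorem sum_prod_mul_log_one_div_prod (hpsum : ∀ i, ∑ x, p i x = 1) :
    ∑ z : ι → Z, (∏ i, p i (z i)) * log (1 / ∏ i, p i (z i)) = ∑ j, entropy (p j) := by
  simp_rw [prod_mul_log_one_div_prod, entropy]
  rw [sum_comm]
  exact sum_congr rfl fun j _ => sum_prod_mul_apply hpsum j fun x => log (1 / p j x)

theorem sum_prod_mul_apply_mul_log_one_div_prod (hpsum : ∀ i, ∑ x, p i x = 1) (i : ι)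
    (f : Z → ℝ) :
    ∑ z : ι → Z, (∏ k, p k (z k)) * f (z i) * log (1 / ∏ k, p k (z k))
      = ∑ x, p i x * f x * log (1 / p i x)
        + (∑ x, p i x * f x) * ∑ j ∈ univ.erase i, entropy (p j) := by
  have hsplit : ∀ z : ι → Z, (∏ k, p k (z k)) * f (z i) * log (1 / ∏ k, p k (z k))
      = ∑ j, (∏ k, p k (z k)) * (f (z i) * log (1 / p j (z j))) := fun z => by
    rw [mul_right_comm, prod_mul_log_one_div_prod, sum_mul]
    exact sum_congr rfl fun j _ => by ring
  simp_rw [hsplit]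
  rw [sum_comm, ← add_sum_erase _ _ (mem_univ i), mul_sum]
  congr 1
  · simpa only [mul_assoc] using sum_prod_mul_apply hpsum i fun x => f x * log (1 / p i x)
  · exact sum_congr rfl fun j hj =>
      sum_prod_mul_apply_mul_apply hpsum (ne_of_mem_erase hj).symm f
        fun x => log (1 / p j x)

theorem sum_prod_mul_weighted_sum_mul_log_one_div_prod (hpsum : ∀ i, ∑ x, p i x = 1)
    (α : ι → ℝ) (f : Z → ℝ) :
    ∑ z : ι → Z, (∏ i, p i (z i)) * (∑ i, α i * f (z i)) * log (1 / ∏ i, p i (z i))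
      = ∑ i, α i * (∑ x, p i x * f x * log (1 / p i x)
        + (∑ x, p i x * f x) * ∑ j ∈ univ.erase i, entropy (p j)) := by
  simp_rw [← sum_prod_mul_apply_mul_log_one_div_prod hpsum, mul_sum, sum_mul]
  rw [sum_comm]
  exact sum_congr rfl fun i _ => sum_congr rfl fun z _ => by ring

end Independence

/-- Participation-type gap between the joint self-information weighted risk and the
weighted marginal self-information weighted risks, for independent sources. -/
theorem stmt_1 {ι Z : Type*} [Fintype ι] [DecidableEq ι] [Fintype Z]
    (p : ι → Z → ℝ) (hp : ∀ i z, 0 ≤ p i z) (hpsum : ∀ i, ∑ z, p i z = 1)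
    (ℓ : Z → ℝ) (b : ℝ) (hl0 : ∀ z, 0 ≤ ℓ z) (hlb : ∀ z, ℓ z ≤ b)
    (α : ι → ℝ) (hα : ∀ i, 0 ≤ α i) (hαsum : ∑ i, α i = 1) :
    |(∑ z : ι → Z, (∏ i, p i (z i)) * (∑ i, α i * ℓ (z i)) *
        Real.log (1 / ∏ i, p i (z i)))
      - ∑ i, α i * ∑ zi, p i zi * ℓ zi * Real.log (1 / p i zi)|
    ≤ b * (∑ z : ι → Z, (∏ i, p i (z i)) * Real.log (1 / ∏ i, p i (z i)))
      - b * ∑ i, α i * ∑ zi, p i zi * Real.log (1 / p i zi) := by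
  set L : ι → ℝ := fun i => ∑ x, p i x * ℓ x
  set G : ι → ℝ := fun i => ∑ j ∈ univ.erase i, entropy (p j)
  have hG : ∀ i, 0 ≤ G i := fun i => sum_nonneg fun j _ => entropy_nonneg (hp j) (hpsum j)
  have hL0 : ∀ i, 0 ≤ L i := fun i => sum_nonneg fun x _ => mul_nonneg (hp i x) (hl0 x)
  have hLb : ∀ i, L i ≤ b := fun i => calc
    L i ≤ ∑ x, p i x * b := sum_le_sum fun x _ => mul_le_mul_of_nonneg_left (hlb x) (hp i x)
    _ = b := by rw [← sum_mul, hpsum i, one_mul]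
  have hgap : (∑ z : ι → Z, (∏ i, p i (z i)) * (∑ i, α i * ℓ (z i)) *
        log (1 / ∏ i, p i (z i))) - ∑ i, α i * ∑ x, p i x * ℓ x * log (1 / p i x)
      = ∑ i, α i * (L i * G i) := by
    rw [sum_prod_mul_weighted_sum_mul_log_one_div_prod hpsum, ← sum_sub_distrib]
    exact sum_congr rfl fun i _ => by ring
  have hbound : b * ∑ j, entropy (p j) - b * ∑ i, α i * entropy (p i) = ∑ i, α i * (b * G i) := by
    simp_rw [G, sum_erase_eq_sub (mem_univ _), mul_sub, sum_sub_distrib, ← sum_mul, hαsum,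
      mul_sum, one_mul, mul_left_comm (α _)]
  rw [sum_prod_mul_log_one_div_prod hpsum, hgap, abs_of_nonneg
    (sum_nonneg fun i _ => mul_nonneg (hα i) (mul_nonneg (hL0 i) (hG i)))]
  exact hbound ▸ sum_le_sum fun i _ =>
    mul_le_mul_of_nonneg_left (mul_le_mul_of_nonneg_right (hLb i) (hG i)) (hα i)
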